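/- arXiv:1504.03442 — 2 statements merged into one kernel-verified Lean document; each statement's English description precedes it below -/
import Mathlib

section
/- For p(λ) = -(JᵀJ + λI)⁻¹Jᵀr with λ > 0, the function λ ↦ ‖p(λ)‖ is monotonically nonincreasing in λ. -/
open Matrix Finset

noncomputable def enorm₂ {n : ℕ} (v : Fin n → ℝ) : ℝ := Real.sqrt (∑ i, v i ^ 2)

noncomputable def specNorm {n : ℕ} (A : Matrix (Fin n) (Fin n) ℝ) : ℝ :=
  sSup ((fun v => enorm₂ (A.mulVec v)) '' {v | enorm₂ v ≤ 1})

noncomputable def pstep {n : ℕ} (J : Matrix (Fin n) (Fin n) ℝ) (r : Fin n → ℝ) (lam : ℝ) :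
    Fin n → ℝ :=
  -((Jᵀ * J + lam • (1 : Matrix (Fin n) (Fin n) ℝ))⁻¹.mulVec (Jᵀ.mulVec r))

theorem stmt_4 {n : ℕ} (J : Matrix (Fin n) (Fin n) ℝ) (r : Fin n → ℝ) :
    ∀ lam₁ lam₂ : ℝ, 0 < lam₁ → lam₁ ≤ lam₂ →
      enorm₂ (pstep J r lam₂) ≤ enorm₂ (pstep J r lam₁) := by
  intro lam₁ lam₂ h1 h12
  have h2 : (0:ℝ) < lam₂ := lt_of_lt_of_le h1 h12
  set A : Matrix (Fin n) (Fin n) ℝ := Jᵀ * J with hAdef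
  have hA : A.PosSemidef := by
    have := Matrix.posSemidef_conjTranspose_mul_self (J : Matrix (Fin n) (Fin n) ℝ)
    simpa [Matrix.conjTranspose_eq_transpose_of_trivial, hAdef] using this
  have hB : ∀ lam : ℝ, 0 < lam → (A + lam • (1 : Matrix (Fin n) (Fin n) ℝ)).PosDef := by
    intro lam hlam
    refine Matrix.PosDef.posSemidef_add hA ?_
    rw [Matrix.smul_one_eq_diagonal]
    exact Matrix.PosDef.diagonal (fun _ => hlam)
  have key : ∀ lam : ℝ, 0 < lam →
      (A + lam • (1 : Matrix (Fin n) (Fin n) ℝ)) *ᵥ (pstep J r lam) = -(Jᵀ *ᵥ r) := by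
    intro lam hlam
    have hu := (hB lam hlam).isUnit
    unfold pstep
    rw [Matrix.mulVec_neg, Matrix.mulVec_mulVec,
      Matrix.mul_nonsing_inv _ ((Matrix.isUnit_iff_isUnit_det _).1 hu), Matrix.one_mulVec]
  set x₁ := pstep J r lam₁ with hx1
  set x₂ := pstep J r lam₂ with hx2
  have heq : A *ᵥ x₁ + lam₁ • x₁ = A *ᵥ x₂ + lam₂ • x₂ := by
    have h := (key lam₁ h1).trans (key lam₂ h2).symm
    simpa [Matrix.add_mulVec, Matrix.smul_mulVec, Matrix.one_mulVec] using h
  have hAv : A *ᵥ (x₁ - x₂) = lam₂ • x₂ - lam₁ • x₁ := by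
    rw [Matrix.mulVec_sub]
    rw [sub_eq_sub_iff_add_eq_add, heq, add_comm]
  have hq : (0:ℝ) ≤ (x₁ - x₂) ⬝ᵥ A *ᵥ (x₁ - x₂) := by
    have := hA.dotProduct_mulVec_nonneg (x₁ - x₂)
    simpa using this
  rw [hAv] at hq
  set s : ℝ := x₁ ⬝ᵥ x₂ with hs
  set a2 : ℝ := x₁ ⬝ᵥ x₁ with ha2
  set b2 : ℝ := x₂ ⬝ᵥ x₂ with hb2
  have hcomm : x₂ ⬝ᵥ x₁ = s := dotProduct_comm _ _
  have hq' : 0 ≤ (lam₁ + lam₂) * s - lam₁ * a2 - lam₂ * b2 := by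
    have : (x₁ - x₂) ⬝ᵥ (lam₂ • x₂ - lam₁ • x₁)
        = (lam₁ + lam₂) * s - lam₁ * a2 - lam₂ * b2 := by
      rw [sub_dotProduct, dotProduct_sub, dotProduct_sub,
        dotProduct_smul, dotProduct_smul, dotProduct_smul, dotProduct_smul,
        hcomm, ← hs, ← ha2, ← hb2]
      simp [smul_eq_mul]; ring
    linarith [this ▸ hq]
  have hcs : s * s ≤ a2 * b2 := by
    have h := Finset.sum_mul_sq_le_sq_mul_sq Finset.univ x₁ x₂
    simpa [dotProduct, hs, ha2, hb2, pow_two] using h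
  have ha2n : 0 ≤ a2 := Finset.sum_nonneg fun i _ => mul_self_nonneg _
  have hb2n : 0 ≤ b2 := Finset.sum_nonneg fun i _ => mul_self_nonneg _
  have h3 : lam₁ * a2 + lam₂ * b2 ≤ (lam₁ + lam₂) * s := by linarith
  have hlhs : 0 ≤ lam₁ * a2 + lam₂ * b2 :=
    add_nonneg (mul_nonneg h1.le ha2n) (mul_nonneg h2.le hb2n)
  have h5 : (lam₁ * a2 + lam₂ * b2) ^ 2 ≤ ((lam₁ + lam₂) * s) ^ 2 :=
    pow_le_pow_left₀ hlhs h3 2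
  have h4 : ((lam₁ + lam₂) * s) ^ 2 ≤ (lam₁ + lam₂) ^ 2 * (a2 * b2) := by
    have := mul_le_mul_of_nonneg_left hcs (sq_nonneg (lam₁ + lam₂))
    nlinarith [this]
  have h54 : (lam₁ * a2 + lam₂ * b2) ^ 2 ≤ (lam₁ + lam₂) ^ 2 * (a2 * b2) := h5.trans h4
  have key2 : (b2 - a2) * (lam₂ ^ 2 * b2 - lam₁ ^ 2 * a2) ≤ 0 := by nlinarith [h54]
  have hfin : b2 ≤ a2 := by
    by_contra hcon
    push_neg at hcon
    have hf2 : 0 < lam₂ ^ 2 * b2 - lam₁ ^ 2 * a2 := by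
      have e1 : 0 ≤ (lam₂ ^ 2 - lam₁ ^ 2) * b2 :=
        mul_nonneg (by nlinarith) hb2n
      have e2 : lam₁ ^ 2 * a2 < lam₁ ^ 2 * b2 :=
        mul_lt_mul_of_pos_left hcon (by positivity)
      nlinarith
    exact absurd (mul_pos (sub_pos.mpr hcon) hf2) (not_lt.mpr key2)
  unfold enorm₂
  apply Real.sqrt_le_sqrt
  have e1 : ∑ i, x₁ i ^ 2 = a2 := by simp [ha2, dotProduct, pow_two]
  have e2 : ∑ i, x₂ i ^ 2 = b2 := by simp [hb2, dotProduct, pow_two]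
  rw [e1, e2]; exact hfin
end

section
/- Let p(λ) = -(JᵀJ + λI)⁻¹Jᵀr for λ > 0. Then ‖r + J p(λ)‖ → ‖P r‖ as λ → 0⁺, where P is the orthogonal projector onto the orthogonal complement of the range of J, and ‖r + J p(λ)‖ → ‖r‖ as λ → ∞. -/
open Matrix Finset

namespace Stmt5Aux

noncomputable def toE {n : ℕ} (v : Fin n → ℝ) : EuclideanSpace ℝ (Fin n) :=
  (WithLp.equiv 2 (Fin n → ℝ)).symm v

lemma enorm_eq {n : ℕ} (v : Fin n → ℝ) : enorm₂ v = ‖toE v‖ := by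
  rw [EuclideanSpace.norm_eq]
  simp [enorm₂, toE, Real.norm_eq_abs, sq_abs]

lemma toE_sub {n : ℕ} (x y : Fin n → ℝ) : toE (x - y) = toE x - toE y := rfl

lemma dot_eq_inner {n : ℕ} (x y : Fin n → ℝ) : x ⬝ᵥ y = inner ℝ (toE x) (toE y) := by
  simp [PiLp.inner_apply, dotProduct, toE, RCLike.inner_apply, mul_comm]

lemma dot_self_eq {n : ℕ} (x : Fin n → ℝ) : x ⬝ᵥ x = enorm₂ x ^ 2 := by
  rw [dot_eq_inner, enorm_eq, real_inner_self_eq_norm_sq]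

lemma cauchy {n : ℕ} (x y : Fin n → ℝ) : x ⬝ᵥ y ≤ enorm₂ x * enorm₂ y := by
  rw [dot_eq_inner, enorm_eq, enorm_eq]
  exact real_inner_le_norm _ _

lemma enorm_nonneg {n : ℕ} (x : Fin n → ℝ) : 0 ≤ enorm₂ x := by
  rw [enorm_eq]; exact norm_nonneg _

lemma enorm_smul {n : ℕ} (c : ℝ) (x : Fin n → ℝ) : enorm₂ (c • x) = |c| * enorm₂ x := by
  rw [enorm_eq, enorm_eq, show toE (c • x) = c • toE x from rfl, norm_smul,
    Real.norm_eq_abs]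

lemma enorm_neg {n : ℕ} (x : Fin n → ℝ) : enorm₂ (-x) = enorm₂ x := by
  rw [enorm_eq, enorm_eq, show toE (-x) = -toE x from rfl, norm_neg]

lemma abs_enorm_sub_enorm_le {n : ℕ} (x y : Fin n → ℝ) :
    |enorm₂ x - enorm₂ y| ≤ enorm₂ (x - y) := by
  rw [enorm_eq, enorm_eq, enorm_eq, toE_sub]
  exact abs_norm_sub_norm_le _ _

lemma dot_transpose {n : ℕ} (J : Matrix (Fin n) (Fin n) ℝ) (x y : Fin n → ℝ) :
    (Jᵀ *ᵥ x) ⬝ᵥ y = x ⬝ᵥ (J *ᵥ y) := by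
  rw [dotProduct_comm, dotProduct_mulVec, vecMul_transpose, dotProduct_comm]

lemma Bvec {n : ℕ} (J : Matrix (Fin n) (Fin n) ℝ) (lam : ℝ) (u : Fin n → ℝ) :
    (Jᵀ * J + lam • (1 : Matrix (Fin n) (Fin n) ℝ)) *ᵥ u = Jᵀ *ᵥ (J *ᵥ u) + lam • u := by
  rw [add_mulVec, smul_mulVec, one_mulVec, mulVec_mulVec]

lemma est1 {n : ℕ} (J : Matrix (Fin n) (Fin n) ℝ) {lam : ℝ} (hl : 0 ≤ lam) (u : Fin n → ℝ) :
    lam * enorm₂ (J *ᵥ u) ^ 2 ≤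
      enorm₂ ((Jᵀ * J + lam • (1 : Matrix (Fin n) (Fin n) ℝ)) *ᵥ u) ^ 2 := by
  rw [Bvec]
  have h1 : (Jᵀ *ᵥ (J *ᵥ u)) ⬝ᵥ u = (J *ᵥ u) ⬝ᵥ (J *ᵥ u) := dot_transpose J _ _
  have h2 : u ⬝ᵥ (Jᵀ *ᵥ (J *ᵥ u)) = (J *ᵥ u) ⬝ᵥ (J *ᵥ u) := by
    rw [dotProduct_comm]; exact h1
  have expand : (Jᵀ *ᵥ (J *ᵥ u) + lam • u) ⬝ᵥ (Jᵀ *ᵥ (J *ᵥ u) + lam • u)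
      = (Jᵀ *ᵥ (J *ᵥ u)) ⬝ᵥ (Jᵀ *ᵥ (J *ᵥ u)) + 2 * lam * ((J *ᵥ u) ⬝ᵥ (J *ᵥ u))
        + lam ^ 2 * (u ⬝ᵥ u) := by
    simp only [add_dotProduct, dotProduct_add, smul_dotProduct, dotProduct_smul,
      smul_eq_mul, h1, h2]
    ring
  rw [← dot_self_eq (Jᵀ *ᵥ (J *ᵥ u) + lam • u), expand, dot_self_eq, dot_self_eq,
    dot_self_eq]
  have hA := enorm_nonneg (Jᵀ *ᵥ (J *ᵥ u))
  have hJ := enorm_nonneg (J *ᵥ u)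
  have hu := enorm_nonneg u
  nlinarith

lemma est2 {n : ℕ} (J : Matrix (Fin n) (Fin n) ℝ) {lam : ℝ} (hl : 0 ≤ lam) (u : Fin n → ℝ) :
    lam * enorm₂ u ≤ enorm₂ ((Jᵀ * J + lam • (1 : Matrix (Fin n) (Fin n) ℝ)) *ᵥ u) := by
  set B := Jᵀ * J + lam • (1 : Matrix (Fin n) (Fin n) ℝ)
  have hdot : lam * (u ⬝ᵥ u) ≤ (B *ᵥ u) ⬝ᵥ u := by
    rw [show B *ᵥ u = Jᵀ *ᵥ (J *ᵥ u) + lam • u from Bvec J lam u, add_dotProduct,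
      smul_dotProduct, dot_transpose, smul_eq_mul]
    have hJ : 0 ≤ (J *ᵥ u) ⬝ᵥ (J *ᵥ u) := by rw [dot_self_eq]; positivity
    linarith
  have hc : (B *ᵥ u) ⬝ᵥ u ≤ enorm₂ (B *ᵥ u) * enorm₂ u := cauchy _ _
  rcases eq_or_lt_of_le (enorm_nonneg u) with h0 | h0
  · rw [← h0, mul_zero]; exact enorm_nonneg _
  · rw [dot_self_eq] at hdot
    have : lam * enorm₂ u * enorm₂ u ≤ enorm₂ (B *ᵥ u) * enorm₂ u := by nlinarith
    exact le_of_mul_le_mul_right this h0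

lemma posdef_B {n : ℕ} (J : Matrix (Fin n) (Fin n) ℝ) {lam : ℝ} (hl : 0 < lam) :
    (Jᵀ * J + lam • (1 : Matrix (Fin n) (Fin n) ℝ)).PosDef := by
  have h1 : (Jᵀ * J).PosSemidef := by
    have := posSemidef_conjTranspose_mul_self J
    rwa [conjTranspose_eq_transpose_of_trivial] at this
  have h2 : (lam • (1 : Matrix (Fin n) (Fin n) ℝ)).PosDef := by
    rw [smul_one_eq_diagonal]
    exact .diagonal fun i => hl
  exact Matrix.PosDef.posSemidef_add h1 h2

lemma opbound {n : ℕ} (M : Matrix (Fin n) (Fin n) ℝ) :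
    ∃ C : ℝ, 0 ≤ C ∧ ∀ v, enorm₂ (M *ᵥ v) ≤ C * enorm₂ v := by
  let T := LinearMap.toContinuousLinearMap (Matrix.toEuclideanLin M)
  refine ⟨‖T‖, norm_nonneg _, fun v => ?_⟩
  have h := T.le_opNorm (toE v)
  have hT : T (toE v) = toE (M *ᵥ v) := rfl
  rwa [hT, ← enorm_eq, ← enorm_eq] at h

end Stmt5Aux

open Stmt5Aux in
/-- `Pr` is the orthogonal projection of `r` onto the orthogonal complement of the
range of `J`: the difference `r - Pr` lies in the range of `J` and `Pr` is
orthogonal to the range of `J`. -/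
theorem stmt_5 {n : ℕ} (J : Matrix (Fin n) (Fin n) ℝ) (r Pr : Fin n → ℝ)
    (hproj₁ : ∃ w, r - Pr = J.mulVec w)
    (hproj₂ : ∀ v, J.mulVec v ⬝ᵥ Pr = 0) :
    Filter.Tendsto (fun lam => enorm₂ (r + J.mulVec (pstep J r lam)))
      (nhdsWithin 0 (Set.Ioi 0)) (nhds (enorm₂ Pr)) ∧
    Filter.Tendsto (fun lam => enorm₂ (r + J.mulVec (pstep J r lam)))
      Filter.atTop (nhds (enorm₂ r)) := by
  classical
  obtain ⟨w, hw⟩ := hproj₁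
  have hr : r = Pr + J *ᵥ w := by rw [← hw]; abel
  have hJtPr : Jᵀ *ᵥ Pr = 0 := by
    funext i
    have h := hproj₂ (Pi.single i 1)
    simp only [mulVec_single, MulOpposite.op_one, one_smul, mul_one] at h
    simp only [Pi.zero_apply, mulVec, dotProduct, transpose_apply]
    rw [← h]
    rfl
  -- abbreviations
  set B : ℝ → Matrix (Fin n) (Fin n) ℝ :=
    fun lam => Jᵀ * J + lam • (1 : Matrix (Fin n) (Fin n) ℝ) with hB
  set u : ℝ → (Fin n → ℝ) := fun lam => (B lam)⁻¹ *ᵥ w with hu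
  have hdet : ∀ lam : ℝ, 0 < lam → IsUnit (B lam).det :=
    fun lam hl => (isUnit_iff_isUnit_det _).mp (posdef_B J hl).isUnit
  have hBu : ∀ lam : ℝ, 0 < lam → B lam *ᵥ u lam = w := by
    intro lam hl
    rw [hu, mulVec_mulVec, Matrix.mul_nonsing_inv _ (hdet lam hl), one_mulVec]
  have key : ∀ lam : ℝ, 0 < lam →
      r + J *ᵥ pstep J r lam = Pr + lam • (J *ᵥ u lam) := by
    intro lam hl
    have hJr : Jᵀ *ᵥ r = B lam *ᵥ w - lam • w := by
      rw [hr, mulVec_add, hJtPr, zero_add, Bvec]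
      abel
    have hstep : pstep J r lam = -(w - lam • u lam) := by
      rw [pstep, hJr, mulVec_sub, mulVec_smul]
      rw [show (B lam)⁻¹ *ᵥ (B lam *ᵥ w) = w by
        rw [mulVec_mulVec, Matrix.nonsing_inv_mul _ (hdet lam hl), one_mulVec]]
    rw [hstep, hr, mulVec_neg, mulVec_sub, mulVec_smul]
    abel
  have key2 : ∀ lam : ℝ, 0 < lam →
      (Pr + lam • (J *ᵥ u lam)) - r = -((J * (Jᵀ * J)) *ᵥ u lam) := by
    intro lam hl
    have hJw : J *ᵥ w = (J * (Jᵀ * J)) *ᵥ u lam + lam • (J *ᵥ u lam) := by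
      rw [← hBu lam hl, Bvec, mulVec_add, mulVec_smul, ← mulVec_mulVec, ← mulVec_mulVec]
    rw [hr, hJw]
    abel
  obtain ⟨C, hC0, hC⟩ := opbound (J * (Jᵀ * J))
  have hest1 : ∀ lam : ℝ, 0 < lam → lam * enorm₂ (J *ᵥ u lam) ^ 2 ≤ enorm₂ w ^ 2 := by
    intro lam hl
    have h1 := est1 J hl.le (u lam)
    rwa [show (Jᵀ * J + lam • (1 : Matrix (Fin n) (Fin n) ℝ)) = B lam from rfl,
      hBu lam hl] at h1
  have hest2 : ∀ lam : ℝ, 0 < lam → lam * enorm₂ (u lam) ≤ enorm₂ w := by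
    intro lam hl
    have h2 := est2 J hl.le (u lam)
    rwa [show (Jᵀ * J + lam • (1 : Matrix (Fin n) (Fin n) ℝ)) = B lam from rfl,
      hBu lam hl] at h2
  constructor
  · -- lam → 0⁺
    have hbound : ∀ lam ∈ Set.Ioi (0:ℝ),
        |enorm₂ (r + J *ᵥ pstep J r lam) - enorm₂ Pr| ≤ Real.sqrt lam * enorm₂ w := by
      intro lam hl
      rw [Set.mem_Ioi] at hl
      have hsq : (lam * enorm₂ (J *ᵥ u lam)) ^ 2 ≤ (Real.sqrt lam * enorm₂ w) ^ 2 := by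
        rw [mul_pow, mul_pow, Real.sq_sqrt hl.le]
        have := hest1 lam hl
        nlinarith
      calc |enorm₂ (r + J *ᵥ pstep J r lam) - enorm₂ Pr|
          ≤ enorm₂ ((r + J *ᵥ pstep J r lam) - Pr) := abs_enorm_sub_enorm_le _ _
        _ = enorm₂ (lam • (J *ᵥ u lam)) := by
            rw [key lam hl]
            congr 1
            abel
        _ = lam * enorm₂ (J *ᵥ u lam) := by rw [enorm_smul, abs_of_pos hl]
        _ = Real.sqrt ((lam * enorm₂ (J *ᵥ u lam)) ^ 2) := by
            rw [Real.sqrt_sq (by have := enorm_nonneg (J *ᵥ u lam); positivity)]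
        _ ≤ Real.sqrt ((Real.sqrt lam * enorm₂ w) ^ 2) := Real.sqrt_le_sqrt hsq
        _ = Real.sqrt lam * enorm₂ w := by
            rw [Real.sqrt_sq (by have := enorm_nonneg w; positivity)]
    have hsqz : Filter.Tendsto
        (fun lam => dist (enorm₂ (r + J *ᵥ pstep J r lam)) (enorm₂ Pr))
        (nhdsWithin 0 (Set.Ioi 0)) (nhds 0) := by
      refine squeeze_zero' (g := fun lam => Real.sqrt lam * enorm₂ w) (Filter.Eventually.of_forall fun _ => dist_nonneg) ?_ ?_
      · filter_upwards [self_mem_nhdsWithin] with lam hl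
        rw [Real.dist_eq]
        exact hbound lam hl
      · have h0 : Filter.Tendsto (fun lam : ℝ => Real.sqrt lam * enorm₂ w)
            (nhds 0) (nhds 0) := by
          have := (Real.continuous_sqrt.tendsto 0).mul_const (enorm₂ w)
          simpa using this
        exact h0.mono_left nhdsWithin_le_nhds
    exact tendsto_iff_dist_tendsto_zero.mpr hsqz
  · -- lam → ∞
    have hbound : ∀ lam : ℝ, 1 ≤ lam →
        |enorm₂ (r + J *ᵥ pstep J r lam) - enorm₂ r| ≤ C * enorm₂ w / lam := by
      intro lam hl1
      have hl : (0:ℝ) < lam := lt_of_lt_of_le one_pos hl1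
      have hu2 : enorm₂ (u lam) ≤ enorm₂ w / lam := by
        rw [le_div_iff₀ hl]
        have := hest2 lam hl
        linarith
      calc |enorm₂ (r + J *ᵥ pstep J r lam) - enorm₂ r|
          ≤ enorm₂ ((r + J *ᵥ pstep J r lam) - r) := abs_enorm_sub_enorm_le _ _
        _ = enorm₂ ((J * (Jᵀ * J)) *ᵥ u lam) := by
            rw [key lam hl, key2 lam hl, enorm_neg]
        _ ≤ C * enorm₂ (u lam) := hC _
        _ ≤ C * (enorm₂ w / lam) := mul_le_mul_of_nonneg_left hu2 hC0
        _ = C * enorm₂ w / lam := by ring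
    have hsqz : Filter.Tendsto
        (fun lam => dist (enorm₂ (r + J *ᵥ pstep J r lam)) (enorm₂ r))
        Filter.atTop (nhds 0) := by
      refine squeeze_zero' (g := fun lam => C * enorm₂ w / lam) (Filter.Eventually.of_forall fun _ => dist_nonneg) ?_ ?_
      · filter_upwards [Filter.eventually_ge_atTop 1] with lam hl
        rw [Real.dist_eq]
        exact hbound lam hl
      · have := Filter.Tendsto.const_div_atTop
          (Filter.tendsto_id (α := ℝ) (x := Filter.atTop)) (C * enorm₂ w)
        simpa using this
    exact tendsto_iff_dist_tendsto_zero.mpr hsqz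
end
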